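/- arXiv:1007.0733 — 6 statements merged into one kernel-verified Lean document; each statement's English description precedes it below -/
import Mathlib

section
/- For any δ > 0 there exists a constant C_δ such that for all T > 0, the sum over all integers j of 2^{j/2} (1+2^j)^{-1/2-δ} (ln(2+2^j T))^{1/2} is at most C_δ (ln(2+T))^{1/2}. -/
/-!
For `j ≥ 0` one has `2 + 2^j T ≤ 2^j (2 + T)`, so `log (2 + 2^j T) ≤ (1 + j) log (2 + T)`; for
`j ≤ 0` the logarithm only decreases. Hence the `j`-th term is at most
`2^{j/2} (1 + 2^j)^{-1/2-δ} √(1 + max j 0) · √(log (2 + T))`, and these weights are summable over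
`ℤ`: they decay like `2^{-δ j} √(1 + j)` as `j → ∞` and like `2^{j/2}` as `j → -∞`.
-/

open Real

noncomputable def dyadicWeight (δ : ℝ) (j : ℤ) : ℝ :=
  (2 : ℝ) ^ ((j : ℝ) / 2) * (1 + (2 : ℝ) ^ (j : ℝ)) ^ (-(1/2 : ℝ) - δ)

lemma dyadicWeight_pos (δ : ℝ) (j : ℤ) : 0 < dyadicWeight δ j := by
  unfold dyadicWeight; positivity

lemma dyadicWeight_natCast_le {δ : ℝ} (hδ : -(1/2) ≤ δ) (n : ℕ) :
    dyadicWeight δ n ≤ ((2 : ℝ) ^ (-δ)) ^ n := by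
  have h2n : (0 : ℝ) < 2 ^ (n : ℝ) := by positivity
  calc dyadicWeight δ n
      ≤ (2 : ℝ) ^ ((n : ℝ) / 2) * ((2 : ℝ) ^ (n : ℝ)) ^ (-(1/2 : ℝ) - δ) := by
        unfold dyadicWeight
        push_cast
        gcongr _ * ?_
        exact rpow_le_rpow_of_nonpos h2n (by linarith) (by linarith)
    _ = ((2 : ℝ) ^ (-δ)) ^ n := by
        rw [← rpow_natCast, ← rpow_mul zero_le_two, ← rpow_mul zero_le_two,
          ← rpow_add zero_lt_two]
        ring_nf

lemma dyadicWeight_neg_natCast_le {δ : ℝ} (hδ : -(1/2) ≤ δ) (n : ℕ) :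
    dyadicWeight δ (-n) ≤ ((2 : ℝ) ^ (-(1/2 : ℝ))) ^ n := by
  calc dyadicWeight δ (-n) ≤ (2 : ℝ) ^ (((-n : ℤ) : ℝ) / 2) * 1 := by
        unfold dyadicWeight
        gcongr
        exact rpow_le_one_of_one_le_of_nonpos (by simp) (by linarith)
    _ = ((2 : ℝ) ^ (-(1/2 : ℝ))) ^ n := by
        rw [mul_one, ← rpow_natCast, ← rpow_mul zero_le_two]
        push_cast
        ring_nf

lemma summable_dyadicWeight_mul_sqrt {δ : ℝ} (hδ : 0 < δ) :
    Summable fun j : ℤ ↦ dyadicWeight δ j * √(1 + max (j : ℝ) 0) := by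
  have hδ' : -(1/2) ≤ δ := by linarith
  refine .of_nat_of_neg ?_ ?_
  · set r : ℝ := 2 ^ (-δ)
    have hr : r < 1 := rpow_lt_one_of_one_lt_of_neg one_lt_two (neg_lt_zero.mpr hδ)
    have hgeom : Summable fun n : ℕ ↦ r ^ n + (n : ℝ) ^ 1 * r ^ n :=
      (summable_geometric_of_lt_one (by positivity) hr).add
        (summable_pow_mul_geometric_of_norm_lt_one 1 (by rwa [norm_of_nonneg (by positivity)]))
    refine .of_nonneg_of_le (fun n ↦ mul_nonneg (dyadicWeight_pos δ n).le (sqrt_nonneg _))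
      (fun n ↦ ?_) hgeom
    have hsqrt : √(1 + max ((n : ℤ) : ℝ) 0) ≤ 1 + n := by
      rw [Int.cast_natCast, max_eq_left n.cast_nonneg]
      exact sqrt_le_self_iff.mpr (Or.inr (by simp))
    calc dyadicWeight δ n * √(1 + max ((n : ℤ) : ℝ) 0) ≤ r ^ n * (1 + n) := by
          gcongr
          exact dyadicWeight_natCast_le hδ' n
      _ = r ^ n + (n : ℝ) ^ 1 * r ^ n := by ring
  · refine .of_nonneg_of_le (fun n ↦ mul_nonneg (dyadicWeight_pos δ _).le (sqrt_nonneg _))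
      (fun n ↦ ?_) (summable_geometric_of_lt_one (by positivity)
        (rpow_lt_one_of_one_lt_of_neg one_lt_two (by norm_num : -(1/2 : ℝ) < 0)))
    have hmax : max (((-n : ℤ)) : ℝ) 0 = 0 := max_eq_right (by simp)
    rw [hmax, add_zero, sqrt_one, mul_one]
    exact dyadicWeight_neg_natCast_le hδ' n

lemma two_add_rpow_mul_le (x : ℝ) {T : ℝ} (hT : 0 ≤ T) :
    2 + (2 : ℝ) ^ x * T ≤ (2 : ℝ) ^ max x 0 * (2 + T) := by
  have h1 : (1 : ℝ) ≤ 2 ^ max x 0 := one_le_rpow one_le_two (le_max_right x 0)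
  have h2 : (2 : ℝ) ^ x ≤ 2 ^ max x 0 := rpow_le_rpow_of_exponent_le one_le_two (le_max_left x 0)
  nlinarith

lemma log_two_add_rpow_mul_le (x : ℝ) {T : ℝ} (hT : 0 ≤ T) :
    log (2 + (2 : ℝ) ^ x * T) ≤ (1 + max x 0) * log (2 + T) := by
  have hlog2 : log 2 ≤ log (2 + T) := log_le_log two_pos (by linarith)
  calc log (2 + (2 : ℝ) ^ x * T) ≤ log ((2 : ℝ) ^ max x 0 * (2 + T)) :=
        log_le_log (by positivity) (two_add_rpow_mul_le x hT)
    _ = max x 0 * log 2 + log (2 + T) := by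
        rw [log_mul (by positivity) (by linarith), log_rpow two_pos]
    _ ≤ (1 + max x 0) * log (2 + T) := by
        nlinarith [le_max_right x 0]

lemma sqrt_log_two_add_rpow_mul_le (x : ℝ) {T : ℝ} (hT : 0 ≤ T) :
    √(log (2 + (2 : ℝ) ^ x * T)) ≤ √(1 + max x 0) * √(log (2 + T)) := by
  rw [← sqrt_mul (by positivity)]
  exact sqrt_le_sqrt (log_two_add_rpow_mul_le x hT)

/-- For any `δ > 0` there is a constant `C_δ` such that for all `T > 0`,
`∑_{j ∈ ℤ} 2^{j/2} (1+2^j)^{-1/2-δ} (ln(2+2^j T))^{1/2} ≤ C_δ (ln(2+T))^{1/2}`. -/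
theorem dyadic_log_sum_estimate (δ : ℝ) (hδ : 0 < δ) :
    ∃ C : ℝ, 0 < C ∧ ∀ T : ℝ, 0 < T →
      (∑' j : ℤ, (2 : ℝ) ^ ((j : ℝ) / 2) * (1 + (2 : ℝ) ^ (j : ℝ)) ^ (-(1/2 : ℝ) - δ) *
          Real.sqrt (Real.log (2 + (2 : ℝ) ^ (j : ℝ) * T)))
        ≤ C * Real.sqrt (Real.log (2 + T)) := by
  set c : ℤ → ℝ := fun j ↦ dyadicWeight δ j * √(1 + max (j : ℝ) 0)
  have hc : Summable c := summable_dyadicWeight_mul_sqrt hδ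
  have hc_nonneg (j : ℤ) : 0 ≤ c j := mul_nonneg (dyadicWeight_pos δ j).le (sqrt_nonneg _)
  refine ⟨∑' j, c j, hc.tsum_pos hc_nonneg 0 (by simp [c, dyadicWeight_pos]),
    fun T hT ↦ ?_⟩
  have hterm (j : ℤ) : (2 : ℝ) ^ ((j : ℝ) / 2) * (1 + (2 : ℝ) ^ (j : ℝ)) ^ (-(1/2 : ℝ) - δ) *
      √(log (2 + (2 : ℝ) ^ (j : ℝ) * T)) ≤ c j * √(log (2 + T)) := by
    rw [mul_assoc (dyadicWeight δ j)]
    exact mul_le_mul_of_nonneg_left (sqrt_log_two_add_rpow_mul_le j hT.le)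
      (dyadicWeight_pos δ j).le
  have hmaj : Summable fun j ↦ c j * √(log (2 + T)) := hc.mul_right _
  calc _ ≤ ∑' j, c j * √(log (2 + T)) :=
        (hmaj.of_nonneg_of_le (fun j ↦ by positivity) hterm).tsum_le_tsum hterm hmaj
    _ = (∑' j, c j) * √(log (2 + T)) := tsum_mul_right
end

section
/- Let α ∈ 𝒮(ℝ). There exists a constant C such that for all r > 1 and all m ∈ ℝ with |m| ≤ 2r, one has ∫₀^{2π} |α̂(m − r cos θ)| dθ ≤ C ( r^{−1} + r^{−1/2} ⟨ r − |m| ⟩^{−1/2} ). -/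
/-!
Since `α̂` is a Schwartz function, `‖α̂ x‖ ≲ (1 + x²)⁻¹`, so it suffices to bound
`∫₀^{2π} (1 + (m - r cos θ)²)⁻¹ dθ`. Split the integrand with `sin² + cos² = 1`.

The `sin²` part is at most `π² / r`: `r sin θ (1 + (m - r cos θ)²)⁻¹` is the derivative of
`arctan (m - r cos θ)`, so integrating by parts against `sin θ` leaves `∫ cos θ · arctan (…)`,
which is bounded by `2π · π/2`.

By the symmetries `θ ↦ 2π - θ` and `θ ↦ π - θ`, the `cos²` part is controlled by
`∫₀^{π/2} cos θ (1 + (μ - r cos θ)²)⁻¹ dθ` with `μ = |m|`. On `[0, π/2]` one has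
`1 + c² (sin θ - t₀)² ≤ 2 (1 + (μ - r cos θ)²)` with `c² = r (1 + |r - μ|) / 9`, where
`t₀ = 0` if `r - μ ≤ 1` and otherwise `t₀` is the sine of the angle at which `r cos θ = μ`;
the substitution `u = sin θ` then bounds the integral by `2π / c`.
-/

open Real SchwartzMap FourierTransform

theorem SchwartzMap.exists_norm_le_mul_inv_one_add_sq {F : Type*} [NormedAddCommGroup F]
    [NormedSpace ℝ F] (f : 𝓢(ℝ, F)) : ∃ D, 0 < D ∧ ∀ x : ℝ, ‖f x‖ ≤ D * (1 + x ^ 2)⁻¹ := by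
  obtain ⟨C₀, hC₀, h₀⟩ := f.decay 0 0
  obtain ⟨C₂, hC₂, h₂⟩ := f.decay 2 0
  refine ⟨C₀ + C₂, by positivity, fun x ↦ ?_⟩
  specialize h₀ x
  specialize h₂ x
  simp only [pow_zero, one_mul, norm_iteratedFDeriv_zero, Real.norm_eq_abs, sq_abs] at h₀ h₂
  rw [← div_eq_mul_inv, le_div_iff₀ (by positivity)]
  linarith

theorem integral_deriv_div_one_add_mul_sq_le {g g' : ℝ → ℝ} (hg : ∀ x, HasDerivAt g (g' x) x)
    (hg' : Continuous g') {c : ℝ} (hc : 0 < c) (a b : ℝ) :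
    ∫ x in a..b, g' x / (1 + (c * g x) ^ 2) ≤ π / c := by
  have hderiv : ∀ x ∈ Set.uIcc a b,
      HasDerivAt (fun x ↦ arctan (c * g x) / c) (g' x / (1 + (c * g x) ^ 2)) x := fun x _ ↦
    (((hg x).const_mul c).arctan.div_const c).congr_deriv (by field_simp)
  have hcont : Continuous fun x ↦ g' x / (1 + (c * g x) ^ 2) :=
    hg'.div (continuous_const.mul (continuous_iff_continuousAt.2 fun x ↦ (hg x).continuousAt)
      |>.pow 2 |>.const_add 1) fun x ↦ by positivity
  rw [intervalIntegral.integral_eq_sub_of_hasDerivAt hderiv (hcont.intervalIntegrable _ _),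
    div_sub_div_same, div_le_div_iff_of_pos_right hc]
  linarith [arctan_lt_pi_div_two (c * g b), neg_pi_div_two_lt_arctan (c * g a)]

theorem integral_cos_mul_inv_le_of_le {r μ c t₀ K : ℝ} (hc : 0 < c) (hK : 0 ≤ K)
    (h : ∀ θ ∈ Set.Icc 0 (π / 2), 1 + (c * (sin θ - t₀)) ^ 2 ≤ K * (1 + (μ - r * cos θ) ^ 2)) :
    ∫ θ in 0..π / 2, cos θ * (1 + (μ - r * cos θ) ^ 2)⁻¹ ≤ K * (π / c) := by
  have hcmp : ∀ θ ∈ Set.Icc 0 (π / 2),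
      cos θ * (1 + (μ - r * cos θ) ^ 2)⁻¹ ≤ K * (cos θ / (1 + (c * (sin θ - t₀)) ^ 2)) := by
    intro θ hθ
    have hcos : 0 ≤ cos θ := cos_nonneg_of_mem_Icc ⟨by linarith [hθ.1, pi_pos], hθ.2⟩
    rw [← div_eq_mul_inv, mul_div_assoc', div_le_div_iff₀ (by positivity) (by positivity)]
    nlinarith [mul_le_mul_of_nonneg_left (h θ hθ) hcos]
  calc ∫ θ in 0..π / 2, cos θ * (1 + (μ - r * cos θ) ^ 2)⁻¹
      ≤ ∫ θ in 0..π / 2, K * (cos θ / (1 + (c * (sin θ - t₀)) ^ 2)) := by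
        refine intervalIntegral.integral_mono_on (by positivity) ?_ ?_ hcmp <;>
        exact Continuous.intervalIntegrable (by fun_prop (disch := intros; positivity)) _ _
    _ ≤ K * (π / c) := by
      rw [intervalIntegral.integral_const_mul]
      exact mul_le_mul_of_nonneg_left (integral_deriv_div_one_add_mul_sq_le
        (fun θ ↦ (hasDerivAt_sin θ).sub_const t₀) continuous_cos hc 0 (π / 2)) hK

theorem one_add_mul_sq_le_of_sub_le_one {r μ s q : ℝ} (hr : 0 < r) (ha : r - μ ≤ 1)
    (hq : 0 ≤ q) (hsq : s ^ 2 + q ^ 2 = 1) :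
    1 + r * (1 + |r - μ|) / 9 * s ^ 2 ≤ 2 * (1 + (μ - r * q) ^ 2) := by
  have hq1 : q ≤ 1 := by nlinarith
  set x := r * (1 - q)
  have hx : 0 ≤ x := by positivity
  have hrs : r * s ^ 2 ≤ 2 * x := by nlinarith
  have he : μ - r * q = x - (r - μ) := by ring
  rw [he]
  rcases abs_cases (r - μ) with ⟨habs, hpos⟩ | ⟨habs, hneg⟩
  · rw [habs]; nlinarith [sq_nonneg (x - (r - μ) - 1 / 2)]
  · rw [habs]; nlinarith [sq_nonneg (x - (r - μ) - 1 / 2), mul_nonneg hx (neg_nonneg.2 hneg.le)]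

theorem one_add_mul_sq_sub_le_of_one_lt_sub {r μ s q : ℝ} (hr : 0 < r) (hμ : 0 ≤ μ)
    (ha : 1 < r - μ) (hs : 0 ≤ s) (hq : 0 ≤ q) (hsq : s ^ 2 + q ^ 2 = 1) :
    1 + r * (1 + |r - μ|) / 9 * (s - √(r ^ 2 - μ ^ 2) / r) ^ 2 ≤ 2 * (1 + (μ - r * q) ^ 2) := by
  set P := √(r ^ 2 - μ ^ 2)
  have hP : P ^ 2 = r ^ 2 - μ ^ 2 := sq_sqrt (by nlinarith)
  have hP0 : 0 ≤ P := sqrt_nonneg _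
  have hq1 : q ≤ 1 := by nlinarith
  have hfactor : (r * s - P) * (r * s + P) = (μ - r * q) * (μ + r * q) := by
    linear_combination r ^ 2 * hsq - hP
  have hkey : (r - μ) * (r * s - P) ^ 2 ≤ 4 * r * (μ - r * q) ^ 2 := by
    have h1 : (r - μ) * r ≤ P ^ 2 := by nlinarith
    have h2 : (r * s - P) ^ 2 * P ^ 2 ≤ ((μ - r * q) * (μ + r * q)) ^ 2 := by
      rw [← hfactor, mul_pow]
      gcongr
      nlinarith
    have h3 : ((μ - r * q) * (μ + r * q)) ^ 2 ≤ (μ - r * q) ^ 2 * (2 * r) ^ 2 := by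
      rw [mul_pow]; gcongr; nlinarith
    nlinarith [mul_le_mul_of_nonneg_left h1 (sq_nonneg (r * s - P))]
  have hterm : r * (1 + (r - μ)) / 9 * (s - P / r) ^ 2 ≤ (μ - r * q) ^ 2 := by
    rw [show r * (1 + (r - μ)) / 9 * (s - P / r) ^ 2 = (1 + (r - μ)) * (r * s - P) ^ 2 / (9 * r)
      by field_simp, div_le_iff₀ (by positivity)]
    nlinarith [sq_nonneg (r * s - P)]
  rw [abs_of_pos (by linarith)]
  nlinarith

theorem inv_sqrt_mul_one_add_abs_le {r : ℝ} (hr : 0 < r) (a : ℝ) :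
    (√(r * (1 + |a|)))⁻¹ ≤ r ^ (-(1 / 2) : ℝ) * (1 + a ^ 2) ^ (-(1 / 4) : ℝ) := by
  have hb : 0 < 1 + |a| := by positivity
  have hsq : (1 + |a|) ^ (-(1 / 2) : ℝ) = ((1 + |a|) ^ 2) ^ (-(1 / 4) : ℝ) := by
    rw [← rpow_natCast, ← rpow_mul hb.le]; norm_num
  rw [sqrt_mul hr.le, mul_inv, sqrt_eq_rpow, sqrt_eq_rpow, ← rpow_neg hr.le,
    ← rpow_neg hb.le, hsq]
  refine mul_le_mul_of_nonneg_left (rpow_le_rpow_of_nonpos (by positivity) ?_ (by norm_num))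
    (rpow_nonneg hr.le _)
  nlinarith [abs_nonneg a, sq_abs a]

theorem integral_comp_cos_zero_two_pi {g : ℝ → ℝ} (hg : Continuous g) :
    ∫ θ in 0..2 * π, g (cos θ) =
      2 * ((∫ θ in 0..π / 2, g (cos θ)) + ∫ θ in 0..π / 2, g (-cos θ)) := by
  have hint (a b : ℝ) : IntervalIntegrable (fun θ ↦ g (cos θ)) MeasureTheory.volume a b :=
    (hg.comp continuous_cos).intervalIntegrable a b
  have hreflect : ∫ θ in π..2 * π, g (cos θ) = ∫ θ in 0..π, g (cos θ) := by
    have h :=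
      intervalIntegral.integral_comp_sub_left (fun θ ↦ g (cos θ)) (a := 0) (b := π) (2 * π)
    rw [show 2 * π - π = π by ring, sub_zero] at h
    simpa only [cos_two_pi_sub] using h.symm
  have hreflect' : ∫ θ in π / 2..π, g (cos θ) = ∫ θ in 0..π / 2, g (-cos θ) := by
    have h := intervalIntegral.integral_comp_sub_left (fun θ ↦ g (cos θ)) (a := 0) (b := π / 2) π
    rw [show π - π / 2 = π / 2 by ring, sub_zero] at h
    simpa only [cos_pi_sub] using h.symm
  rw [← intervalIntegral.integral_add_adjacent_intervals (hint 0 π) (hint π (2 * π)), hreflect,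
    ← intervalIntegral.integral_add_adjacent_intervals (hint 0 (π / 2)) (hint (π / 2) π),
    hreflect']
  ring

theorem integral_sin_sq_mul_inv_le (m : ℝ) {r : ℝ} (hr : 0 < r) :
    ∫ θ in 0..2 * π, sin θ ^ 2 * (1 + (m - r * cos θ) ^ 2)⁻¹ ≤ π ^ 2 / r := by
  have hderiv (θ : ℝ) : HasDerivAt (fun θ ↦ arctan (m - r * cos θ))
      (r * sin θ * (1 + (m - r * cos θ) ^ 2)⁻¹) θ := by
    have := (((hasDerivAt_cos θ).const_mul r).const_sub m).arctan
    convert this using 1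
    field_simp
  have hibp := intervalIntegral.integral_mul_deriv_eq_deriv_mul (a := 0) (b := 2 * π)
    (fun θ _ ↦ hasDerivAt_sin θ) (fun θ _ ↦ hderiv θ)
    (continuous_cos.intervalIntegrable _ _)
    (Continuous.intervalIntegrable (by fun_prop (disch := intros; positivity)) _ _)
  simp only [sin_two_pi, sin_zero, zero_mul, sub_zero, zero_sub] at hibp
  have hbound : ‖∫ θ in 0..2 * π, cos θ * arctan (m - r * cos θ)‖ ≤ π / 2 * |2 * π - 0| := by
    refine intervalIntegral.norm_integral_le_of_norm_le_const fun θ _ ↦ ?_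
    rw [norm_mul, Real.norm_eq_abs, Real.norm_eq_abs]
    calc |cos θ| * |arctan (m - r * cos θ)| ≤ 1 * (π / 2) := by
          gcongr
          · exact abs_cos_le_one θ
          · exact abs_le.2 ⟨(neg_pi_div_two_lt_arctan _).le, (arctan_lt_pi_div_two _).le⟩
      _ = π / 2 := one_mul _
  have hrewrite : ∫ θ in 0..2 * π, sin θ * (r * sin θ * (1 + (m - r * cos θ) ^ 2)⁻¹) =
      r * ∫ θ in 0..2 * π, sin θ ^ 2 * (1 + (m - r * cos θ) ^ 2)⁻¹ := by
    rw [← intervalIntegral.integral_const_mul]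
    congr 1 with θ
    ring
  rw [hrewrite] at hibp
  rw [sub_zero, abs_of_pos two_pi_pos, Real.norm_eq_abs] at hbound
  rw [le_div_iff₀ hr, mul_comm, hibp]
  nlinarith [neg_le_abs (∫ θ in 0..2 * π, cos θ * arctan (m - r * cos θ))]

theorem integral_cos_mul_inv_le {r μ : ℝ} (hr : 0 < r) (hμ : 0 ≤ μ) :
    ∫ θ in 0..π / 2, cos θ * (1 + (μ - r * cos θ) ^ 2)⁻¹ ≤
      24 * (r ^ (-(1 / 2) : ℝ) * (1 + (r - μ) ^ 2) ^ (-(1 / 4) : ℝ)) := by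
  set w := r * (1 + |r - μ|)
  have hw : 0 < w := by positivity
  have hlower : ∃ t₀, ∀ θ ∈ Set.Icc 0 (π / 2),
      1 + (√w / 3 * (sin θ - t₀)) ^ 2 ≤ 2 * (1 + (μ - r * cos θ) ^ 2) := by
    have hsq (x : ℝ) : (√w / 3 * x) ^ 2 = w / 9 * x ^ 2 := by
      rw [mul_pow, div_pow, sq_sqrt hw.le]; ring
    simp only [hsq]
    rcases le_or_gt (r - μ) 1 with ha | ha
    · refine ⟨0, fun θ hθ ↦ ?_⟩
      rw [sub_zero]
      exact one_add_mul_sq_le_of_sub_le_one hr ha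
        (cos_nonneg_of_mem_Icc ⟨by linarith [hθ.1, pi_pos], hθ.2⟩) (sin_sq_add_cos_sq θ)
    · refine ⟨√(r ^ 2 - μ ^ 2) / r, fun θ hθ ↦ ?_⟩
      exact one_add_mul_sq_sub_le_of_one_lt_sub hr hμ ha
        (sin_nonneg_of_nonneg_of_le_pi hθ.1 (by linarith [hθ.2, pi_pos]))
        (cos_nonneg_of_mem_Icc ⟨by linarith [hθ.1, pi_pos], hθ.2⟩) (sin_sq_add_cos_sq θ)
  obtain ⟨t₀, ht₀⟩ := hlower
  calc ∫ θ in 0..π / 2, cos θ * (1 + (μ - r * cos θ) ^ 2)⁻¹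
      ≤ 2 * (π / (√w / 3)) := integral_cos_mul_inv_le_of_le (by positivity) zero_le_two ht₀
    _ = 6 * π * (√w)⁻¹ := by field_simp; ring
    _ ≤ 24 * (√w)⁻¹ := by gcongr; linarith [pi_lt_four]
    _ ≤ 24 * (r ^ (-(1 / 2) : ℝ) * (1 + (r - μ) ^ 2) ^ (-(1 / 4) : ℝ)) := by
        gcongr
        exact inv_sqrt_mul_one_add_abs_le hr _

theorem sq_mul_inv_le_mul_inv_abs {q r : ℝ} (hq : 0 ≤ q) (hq1 : q ≤ 1) (hr : 0 ≤ r) (μ : ℝ) :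
    q ^ 2 * (1 + (μ - r * q) ^ 2)⁻¹ ≤ q * (1 + (|μ| - r * q) ^ 2)⁻¹ := by
  have hsq : (|μ| - r * q) ^ 2 ≤ (μ - r * q) ^ 2 := by
    rcases abs_cases μ with ⟨h, -⟩ | ⟨h, hμ⟩
    · rw [h]
    · rw [h]; nlinarith [mul_nonneg hr hq]
  calc q ^ 2 * (1 + (μ - r * q) ^ 2)⁻¹ ≤ q * (1 + (μ - r * q) ^ 2)⁻¹ := by
        gcongr; nlinarith
    _ ≤ q * (1 + (|μ| - r * q) ^ 2)⁻¹ := by gcongr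

theorem integral_inv_one_add_sq_le (m : ℝ) {r : ℝ} (hr : 0 < r) :
    ∫ θ in 0..2 * π, (1 + (m - r * cos θ) ^ 2)⁻¹ ≤
      100 * (r⁻¹ + r ^ (-(1 / 2) : ℝ) * (1 + (r - |m|) ^ 2) ^ (-(1 / 4) : ℝ)) := by
  set g : ℝ → ℝ := fun x ↦ x ^ 2 * (1 + (m - r * x) ^ 2)⁻¹
  have hg : Continuous g := by fun_prop (disch := intros; positivity)
  have hsplit : ∫ θ in 0..2 * π, (1 + (m - r * cos θ) ^ 2)⁻¹ =
      (∫ θ in 0..2 * π, sin θ ^ 2 * (1 + (m - r * cos θ) ^ 2)⁻¹) + ∫ θ in 0..2 * π, g (cos θ) := by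
    rw [← intervalIntegral.integral_add]
    · congr 1 with θ
      simp only [g]
      rw [← add_mul, sin_sq_add_cos_sq, one_mul]
    all_goals exact Continuous.intervalIntegrable (by fun_prop (disch := intros; positivity)) _ _
  have hquarter (μ : ℝ) (hμ : |μ| = |m|) :
      ∫ θ in 0..π / 2, cos θ ^ 2 * (1 + (μ - r * cos θ) ^ 2)⁻¹ ≤
        ∫ θ in 0..π / 2, cos θ * (1 + (|m| - r * cos θ) ^ 2)⁻¹ := by
    refine intervalIntegral.integral_mono_on (by positivity)
      (Continuous.intervalIntegrable (by fun_prop (disch := intros; positivity)) _ _)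
      (Continuous.intervalIntegrable (by fun_prop (disch := intros; positivity)) _ _)
      fun θ hθ ↦ ?_
    rw [← hμ]
    exact sq_mul_inv_le_mul_inv_abs (cos_nonneg_of_mem_Icc ⟨by linarith [hθ.1, pi_pos], hθ.2⟩)
      (cos_le_one θ) hr.le μ
  have hneg : ∫ θ in 0..π / 2, g (-cos θ) =
      ∫ θ in 0..π / 2, cos θ ^ 2 * (1 + (-m - r * cos θ) ^ 2)⁻¹ := by
    congr 1 with θ
    simp only [g]
    ring
  rw [hsplit, integral_comp_cos_zero_two_pi hg, hneg]
  have hR : 0 ≤ r ^ (-(1 / 2) : ℝ) * (1 + (r - |m|) ^ 2) ^ (-(1 / 4) : ℝ) := by positivity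
  have hπ : π ^ 2 / r ≤ 100 * r⁻¹ := by
    rw [div_eq_mul_inv]; gcongr; nlinarith [pi_lt_four, pi_pos]
  linarith [hquarter m rfl, hquarter (-m) (abs_neg m), integral_sin_sq_mul_inv_le m hr,
    integral_cos_mul_inv_le hr (abs_nonneg m)]

/-- Lemma 2.1, second part: for a Schwartz function `α` there is `C` such that for all
`r > 1` and `|m| ≤ 2r`,
`∫₀^{2π} |α̂(m − r cos θ)| dθ ≤ C (r⁻¹ + r^{-1/2} ⟨r − |m|⟩^{-1/2})`. -/
theorem bessel_kernel_pointwise_main (α : SchwartzMap ℝ ℂ) :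
    ∃ C : ℝ, 0 < C ∧ ∀ m r : ℝ, 1 < r → |m| ≤ 2 * r →
      (∫ θ in (0:ℝ)..(2 * π), ‖𝓕 (⇑α) (m - r * Real.cos θ)‖)
        ≤ C * (r⁻¹ + r ^ (-(1/2) : ℝ) * (1 + (r - |m|) ^ 2) ^ (-(1/4) : ℝ)) := by
  obtain ⟨D, hD, hdecay⟩ := (𝓕 α).exists_norm_le_mul_inv_one_add_sq
  refine ⟨100 * D, by positivity, fun m r hr _ ↦ ?_⟩
  calc ∫ θ in 0..2 * π, ‖𝓕 (⇑α) (m - r * cos θ)‖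
      ≤ ∫ θ in 0..2 * π, D * (1 + (m - r * cos θ) ^ 2)⁻¹ :=
        intervalIntegral.integral_mono_on two_pi_pos.le
          (((𝓕 α).continuous.comp (by fun_prop)).norm.intervalIntegrable _ _)
          (Continuous.intervalIntegrable (by fun_prop (disch := intros; positivity)) _ _)
          fun θ _ ↦ hdecay _
    _ = D * ∫ θ in 0..2 * π, (1 + (m - r * cos θ) ^ 2)⁻¹ :=
        intervalIntegral.integral_const_mul _ _
    _ ≤ D * (100 * (r⁻¹ + r ^ (-(1 / 2) : ℝ) * (1 + (r - |m|) ^ 2) ^ (-(1 / 4) : ℝ))) := by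
        gcongr
        exact integral_inv_one_add_sq_le m (by linarith)
    _ = 100 * D * (r⁻¹ + r ^ (-(1 / 2) : ℝ) * (1 + (r - |m|) ^ 2) ^ (-(1 / 4) : ℝ)) := by ring
end

section
/- There is an absolute constant C such that for all integers k ≥ 1 and all real r > 1: ∫_{r/2 < m < r−1} ⟨m−r⟩^{−1} min(k²/d(m)², d(m)²/k²) dm ≤ C, where d(m) = √(r² − m²). -/
/-!
Put `t = r - m ∈ [1, r/2]`. Then `r t ≤ d(m)² ≤ 2 r t` and `⟨m - r⟩⁻¹ ≤ t⁻¹`, so the integrand is at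
most `min (A / t²) B` with `A = k² / r`, `B = 2 r / k²`. Bounding this by `B` for `t ≤ A` and by
`A / t²` for `t ≥ A` gives the integral bound `B A + A / A = 3`, whatever the sizes of `k` and `r`.
-/

open Real MeasureTheory

theorem rpow_one_add_sq_neg_half_le_inv {x : ℝ} (hx : 0 < x) :
    (1 + x ^ 2) ^ (-(1 / 2) : ℝ) ≤ x⁻¹ := by
  rw [rpow_neg (by positivity), ← sqrt_eq_rpow]
  exact inv_anti₀ hx (le_sqrt_of_sq_le (by linarith))

theorem weight_mul_min_nonneg {K r m : ℝ} (hK : 0 ≤ K) (hm : m ^ 2 ≤ r ^ 2) :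
    0 ≤ (1 + (m - r) ^ 2) ^ (-(1 / 2) : ℝ) * min (K / (r ^ 2 - m ^ 2)) ((r ^ 2 - m ^ 2) / K) := by
  have : 0 ≤ r ^ 2 - m ^ 2 := by linarith
  positivity

theorem weight_mul_min_le {K r m : ℝ} (hK : 0 < K) (hm : 0 ≤ m) (hmr : m < r) :
    (1 + (m - r) ^ 2) ^ (-(1 / 2) : ℝ) * min (K / (r ^ 2 - m ^ 2)) ((r ^ 2 - m ^ 2) / K) ≤
      min (K / r / (r - m) ^ 2) (2 * r / K) := by
  have ht : 0 < r - m := by linarith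
  have hr : 0 < r := by linarith
  have hd : 0 < r ^ 2 - m ^ 2 := by nlinarith
  have hweight : (1 + (m - r) ^ 2) ^ (-(1 / 2) : ℝ) ≤ (r - m)⁻¹ := by
    rw [← neg_sub r m, neg_sq]
    exact rpow_one_add_sq_neg_half_le_inv ht
  have hmin : min (K / (r ^ 2 - m ^ 2)) ((r ^ 2 - m ^ 2) / K) ≤
      min (K / (r * (r - m))) (2 * r * (r - m) / K) := by
    gcongr <;> nlinarith
  calc _ ≤ (r - m)⁻¹ * min (K / (r * (r - m))) (2 * r * (r - m) / K) :=
        mul_le_mul hweight hmin (by positivity) (by positivity)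
    _ = min (K / r / (r - m) ^ 2) (2 * r / K) := by
        rw [mul_min_of_nonneg _ _ (by positivity)]
        congr 1 <;> field_simp

theorem intervalIntegral.integral_mono_of_nonneg_on {f g : ℝ → ℝ} {a b : ℝ} (hab : a ≤ b)
    (hg : IntervalIntegrable g volume a b) (hf : ∀ x ∈ Set.Icc a b, 0 ≤ f x)
    (hfg : ∀ x ∈ Set.Icc a b, f x ≤ g x) : ∫ x in a..b, f x ≤ ∫ x in a..b, g x := by
  rw [intervalIntegral.integral_of_le hab, intervalIntegral.integral_of_le hab]
  refine integral_mono_of_nonneg ?_ hg.1 ?_ <;>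
    filter_upwards [ae_restrict_mem measurableSet_Ioc] with x hx
  exacts [hf x (Set.Ioc_subset_Icc_self hx), hfg x (Set.Ioc_subset_Icc_self hx)]

section MinDivSq

variable {a b : ℝ}

theorem integral_div_sq (A : ℝ) (ha : 0 < a) (hb : 0 < b) :
    ∫ t in a..b, A / t ^ 2 = A * (a⁻¹ - b⁻¹) := by
  have h0 : (0 : ℝ) ∉ Set.uIcc a b := fun h => (lt_min ha hb).not_ge h.1
  simp_rw [div_eq_mul_inv, ← zpow_natCast, ← zpow_neg]
  rw [intervalIntegral.integral_const_mul, integral_zpow (Or.inr ⟨by norm_num, h0⟩)]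
  congr 1
  norm_num
  ring

theorem intervalIntegrable_div_sq (A : ℝ) (ha : 0 < a) (hb : 0 < b) :
    IntervalIntegrable (fun t => A / t ^ 2) volume a b := by
  refine ContinuousOn.intervalIntegrable fun t ht => ?_
  have : t ≠ 0 := ((lt_min ha hb).trans_le ht.1).ne'
  fun_prop (disch := positivity)

theorem intervalIntegrable_min_div_sq (A B : ℝ) (ha : 0 < a) (hb : 0 < b) :
    IntervalIntegrable (fun t => min (A / t ^ 2) B) volume a b := by
  refine ContinuousOn.intervalIntegrable fun t ht => ?_
  have : t ≠ 0 := ((lt_min ha hb).trans_le ht.1).ne'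
  fun_prop (disch := positivity)

theorem integral_min_div_sq_le_mul_sub {A B : ℝ} (ha : 0 < a) (hab : a ≤ b) :
    ∫ t in a..b, min (A / t ^ 2) B ≤ B * (b - a) := by
  calc _ ≤ ∫ _ in a..b, B := intervalIntegral.integral_mono_on hab
          (intervalIntegrable_min_div_sq A B ha (ha.trans_le hab)) intervalIntegrable_const
          fun _ _ => min_le_right _ _
    _ = B * (b - a) := by simp [mul_comm]

theorem integral_min_div_sq_le_mul_inv_sub {A B : ℝ} (ha : 0 < a) (hab : a ≤ b) :
    ∫ t in a..b, min (A / t ^ 2) B ≤ A * (a⁻¹ - b⁻¹) := by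
  have hb := ha.trans_le hab
  calc _ ≤ ∫ t in a..b, A / t ^ 2 := intervalIntegral.integral_mono_on hab
          (intervalIntegrable_min_div_sq A B ha hb)
          (intervalIntegrable_div_sq A ha hb)
          fun _ _ => min_le_left _ _
    _ = A * (a⁻¹ - b⁻¹) := integral_div_sq A ha hb

theorem integral_min_div_sq_le {A B : ℝ} (hA : 0 ≤ A) (hB : 0 ≤ B) (ha : 0 < a) (hab : a ≤ b) {c : ℝ}
    (hc : 0 < c) : ∫ t in a..b, min (A / t ^ 2) B ≤ B * c + A / c := by
  rcases le_or_gt c a with hca | hac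
  · calc _ ≤ A * (a⁻¹ - b⁻¹) := integral_min_div_sq_le_mul_inv_sub ha hab
      _ ≤ A * c⁻¹ := by gcongr; linarith [inv_pos.2 (ha.trans_le hab), inv_anti₀ hc hca]
      _ ≤ B * c + A / c := by rw [← div_eq_mul_inv]; linarith [mul_nonneg hB hc.le]
  rcases le_or_gt b c with hbc | hcb
  · calc _ ≤ B * (b - a) := integral_min_div_sq_le_mul_sub ha hab
      _ ≤ B * c := by gcongr; linarith
      _ ≤ B * c + A / c := by linarith [div_nonneg hA hc.le]
  rw [← intervalIntegral.integral_add_adjacent_intervals (intervalIntegrable_min_div_sq A B ha hc)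
    (intervalIntegrable_min_div_sq A B hc (hc.trans hcb))]
  have h₁ := integral_min_div_sq_le_mul_sub (A := A) (B := B) ha hac.le
  have h₂ := integral_min_div_sq_le_mul_inv_sub (A := A) (B := B) hc hcb.le
  nlinarith [inv_pos.2 (hc.trans hcb), div_eq_mul_inv A c]

end MinDivSq

/-- There is an absolute constant `C` such that for all integers `k ≥ 1` and all `r > 1`,
`∫_{r/2}^{r−1} ⟨m−r⟩⁻¹ min(k²/d(m)², d(m)²/k²) dm ≤ C` with `d(m) = √(r²−m²)`. -/
theorem min_weight_integral_bound :
    ∃ C : ℝ, 0 < C ∧ ∀ k : ℕ, 1 ≤ k → ∀ r : ℝ, 1 < r →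
      (∫ m in (r / 2)..(r - 1),
          (1 + (m - r) ^ 2) ^ (-(1/2) : ℝ) *
            min ((k : ℝ) ^ 2 / (r ^ 2 - m ^ 2)) ((r ^ 2 - m ^ 2) / (k : ℝ) ^ 2)) ≤ C := by
  refine ⟨3, by norm_num, fun k _ r hr => ?_⟩
  have hK : (0 : ℝ) < (k : ℝ) ^ 2 := by positivity
  rcases le_or_gt (r / 2) (r - 1) with hle | hlt
  · have hr : 0 < r / 2 := by linarith
    have hint := (intervalIntegrable_min_div_sq ((k : ℝ) ^ 2 / r) (2 * r / (k : ℝ) ^ 2) hr one_pos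
      |>.comp_sub_left r)
    rw [sub_half] at hint
    calc _ ≤ ∫ m in (r / 2)..(r - 1), min ((k : ℝ) ^ 2 / r / (r - m) ^ 2) (2 * r / (k : ℝ) ^ 2) :=
          intervalIntegral.integral_mono_of_nonneg_on hle hint
            (fun m hm => weight_mul_min_nonneg hK.le (by nlinarith [hm.1, hm.2]))
            (fun m hm => weight_mul_min_le hK (by linarith [hm.1]) (by linarith [hm.2]))
      _ = ∫ t in (1 : ℝ)..(r / 2), min ((k : ℝ) ^ 2 / r / t ^ 2) (2 * r / (k : ℝ) ^ 2) := by
          rw [intervalIntegral.integral_comp_sub_left (fun t => min ((k : ℝ) ^ 2 / r / t ^ 2) _)]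
          congr 1 <;> ring
      _ ≤ 2 * r / (k : ℝ) ^ 2 * ((k : ℝ) ^ 2 / r) + (k : ℝ) ^ 2 / r / ((k : ℝ) ^ 2 / r) :=
          integral_min_div_sq_le (by positivity) (by positivity) one_pos (by linarith)
            (by positivity)
      _ = 3 := by field_simp; norm_num
  · rw [intervalIntegral.integral_symm]
    refine (neg_nonpos.2 <| intervalIntegral.integral_nonneg hlt.le fun m hm =>
      weight_mul_min_nonneg hK.le (by nlinarith [hm.1, hm.2])).trans (by norm_num)
end

section
/- Fix r ≥ m+1 with r/2 < m < 2r, r > 1, and let θ₀ ∈ (0, π/2] satisfy r cos θ₀ = m, with d = √(r²−m²) = r sin θ₀. Define φ(β) = m − r cos(θ₀ + β/d). Let θ₁ ∈ (0, π/4) satisfy (r/d) sin θ₁ = 1/2. Then for all β with θ = θ₀ + β/d ∈ [θ₁, 3π/4]: (i) 1/2 ≤ φ'(β) ≤ 1 + |φ(β)|, and (ii) |φ(β)| ≥ |β|/2. -/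
/-!
With `θ = θ₀ + β/d` one has `φ(β) = r (cos θ₀ - cos θ)` and `φ'(β) = (r/d) sin θ`. On
`[θ₁, π - θ₁] ⊇ [θ₁, 3π/4]` the sine is at least `sin θ₁ = d/(2r)`; this gives `φ' ≥ 1/2` and,
by the mean value theorem for `cos`, `|φ(β)| ≥ r sin θ₁ |θ - θ₀| = |β|/2`. For the upper bound,
the unit-circle inequality `sin θ₀ (sin θ - sin θ₀) ≤ cos θ₀ |cos θ₀ - cos θ|` scales to
`d (r sin θ - d) ≤ m |φ(β)|`, and `m ≤ d² = (r - m)(r + m)` because `r - m ≥ 1`.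
-/

open Real

namespace Real

theorem sin_le_sin_of_mem_Icc_pi_sub {θ₁ x : ℝ} (hθ₁ : -(π / 2) ≤ θ₁)
    (hx : x ∈ Set.Icc θ₁ (π - θ₁)) : sin θ₁ ≤ sin x := by
  obtain ⟨hlo, hhi⟩ := hx
  rcases le_total x (π / 2) with hx | hx
  · exact sin_le_sin_of_le_of_le_pi_div_two hθ₁ hx hlo
  · rw [← sin_pi_sub x]
    exact sin_le_sin_of_le_of_le_pi_div_two hθ₁ (by linarith) (by linarith)

theorem sin_mul_abs_sub_le_abs_cos_sub {θ₁ a b : ℝ} (hθ₁ : -(π / 2) ≤ θ₁)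
    (ha : a ∈ Set.Icc θ₁ (π - θ₁)) (hb : b ∈ Set.Icc θ₁ (π - θ₁)) :
    sin θ₁ * |a - b| ≤ |cos a - cos b| := by
  wlog hab : a ≤ b generalizing a b
  · rw [abs_sub_comm a, abs_sub_comm (cos a)]
    exact this hb ha (le_of_not_ge hab)
  have hmvt := (convex_Icc θ₁ (π - θ₁)).mul_sub_le_image_sub_of_le_deriv
    (f := fun x => -cos x) continuous_cos.neg.continuousOn
    (differentiable_cos.neg.differentiableOn) (C := sin θ₁) (fun x hx => by
      simpa using sin_le_sin_of_mem_Icc_pi_sub hθ₁ (interior_subset hx)) a ha b hb hab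
  calc sin θ₁ * |a - b| = sin θ₁ * (b - a) := by
        rw [abs_sub_comm, abs_of_nonneg (sub_nonneg.2 hab)]
    _ ≤ cos a - cos b := by linarith
    _ ≤ |cos a - cos b| := le_abs_self _

theorem sin_mul_sub_sin_le_cos_mul_abs_cos_sub {a b : ℝ} (hsa : 0 ≤ sin a) (hca : 0 ≤ cos a) :
    sin a * (sin b - sin a) ≤ cos a * |cos a - cos b| := by
  rcases le_or_gt (sin b) (sin a) with h | h
  · nlinarith [abs_nonneg (cos a - cos b)]
  · have hcb : |cos b| ≤ cos a :=
      abs_le_of_sq_le_sq (by nlinarith [sin_sq_add_cos_sq a, sin_sq_add_cos_sq b]) hca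
    obtain ⟨hcb₁, hcb₂⟩ := abs_le.1 hcb
    rw [abs_of_nonneg (by linarith)]
    -- `(sin b - sin a)(sin b + sin a) = (cos a - cos b)(cos a + cos b)`, and here
    -- `sin a * cos b ≤ cos a * sin b`.
    nlinarith [sin_sq_add_cos_sq a, sin_sq_add_cos_sq b]

end Real

theorem phase_function_properties_general
    (m r θ₀ θ₁ d : ℝ)
    (hmr : m + 1 ≤ r) (hr : 1 < r)
    (hθ₀ : θ₀ ∈ Set.Ioc 0 (π / 2)) (hcos : r * Real.cos θ₀ = m)
    (hdsin : d = r * Real.sin θ₀)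
    (hθ₁ : θ₁ ∈ Set.Ioo 0 (π / 4)) (hsin1 : r / d * Real.sin θ₁ = 1 / 2) :
    ∀ β : ℝ, θ₀ + β / d ∈ Set.Icc θ₁ (3 * π / 4) →
      (1 / 2 ≤ r / d * Real.sin (θ₀ + β / d)) ∧
      (r / d * Real.sin (θ₀ + β / d) ≤ 1 + |m - r * Real.cos (θ₀ + β / d)|) ∧
      (|β| / 2 ≤ |m - r * Real.cos (θ₀ + β / d)|) := by
  intro β hβ
  obtain ⟨hθ₀pos, hθ₀le⟩ := hθ₀
  obtain ⟨hθ₁pos, hθ₁lt⟩ := hθ₁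
  have hr0 : 0 < r := by linarith
  have hs₀ : 0 < sin θ₀ := sin_pos_of_pos_of_lt_pi hθ₀pos (by linarith [pi_pos])
  have hc₀ : 0 ≤ cos θ₀ := cos_nonneg_of_mem_Icc ⟨by linarith, hθ₀le⟩
  have hd0 : 0 < d := hdsin ▸ mul_pos hr0 hs₀
  have hrs₁ : r * sin θ₁ = d / 2 := by
    field_simp at hsin1
    linarith
  have hθ₁θ₀ : θ₁ ≤ θ₀ := by
    by_contra! h
    have := sin_lt_sin_of_lt_of_le_pi_div_two (by linarith) (by linarith) h
    nlinarith
  have hm_le : m ≤ d ^ 2 := by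
    have hd2 : d ^ 2 = r ^ 2 - m ^ 2 := by
      rw [hdsin, ← hcos]
      linear_combination r ^ 2 * sin_sq_add_cos_sq θ₀
    nlinarith
  set θ := θ₀ + β / d with hθ
  have hmem : θ ∈ Set.Icc θ₁ (π - θ₁) := ⟨hβ.1, by linarith [hβ.2]⟩
  have hmem₀ : θ₀ ∈ Set.Icc θ₁ (π - θ₁) := ⟨hθ₁θ₀, by linarith⟩
  have hφ : m - r * cos θ = r * (cos θ₀ - cos θ) := by rw [← hcos]; ring
  refine ⟨?_, ?_, ?_⟩
  · calc 1 / 2 = r / d * sin θ₁ := hsin1.symm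
      _ ≤ r / d * sin θ := by gcongr; exact sin_le_sin_of_mem_Icc_pi_sub (by linarith) hmem
  · have key := sin_mul_sub_sin_le_cos_mul_abs_cos_sub (b := θ) hs₀.le hc₀
    have h1 : d * (r * sin θ - d) ≤ m * |m - r * cos θ| := by
      rw [hφ, abs_mul, abs_of_pos hr0, hdsin, ← hcos]
      linear_combination r ^ 2 * key
    have h2 : m * |m - r * cos θ| ≤ d ^ 2 * |m - r * cos θ| := by gcongr
    rw [div_mul_eq_mul_div, div_le_iff₀ hd0]
    nlinarith
  · calc |β| / 2 = r * sin θ₁ * |θ - θ₀| := by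
          rw [hrs₁, show θ - θ₀ = β / d by ring, abs_div, abs_of_pos hd0]
          field_simp
      _ ≤ r * |cos θ - cos θ₀| := by
          rw [mul_assoc]
          gcongr
          exact sin_mul_abs_sub_le_abs_cos_sub (by linarith) hmem hmem₀
      _ = |m - r * cos θ| := by rw [hφ, abs_mul, abs_of_pos hr0, abs_sub_comm]

/-- Phase lemma (Lemma `lem-phi-pro`): with `r ≥ m+1`, `r/2 < m < 2r`, `r > 1`,
`θ₀ ∈ (0, π/2]` with `r cos θ₀ = m`, `d = √(r²−m²) = r sin θ₀`,
`θ₁ ∈ (0, π/4)` with `(r/d) sin θ₁ = 1/2`, and `φ(β) = m − r cos(θ₀ + β/d)`,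
for all `β` with `θ₀ + β/d ∈ [θ₁, 3π/4]` one has
`1/2 ≤ φ'(β) ≤ 1 + |φ(β)|` and `|φ(β)| ≥ |β|/2`. -/
theorem phase_function_properties
    (m r θ₀ θ₁ d : ℝ)
    (hmr : m + 1 ≤ r) (hm1 : r / 2 < m) (hm2 : m < 2 * r) (hr : 1 < r)
    (hθ₀ : θ₀ ∈ Set.Ioc 0 (π / 2)) (hcos : r * Real.cos θ₀ = m)
    (hd : d = Real.sqrt (r ^ 2 - m ^ 2)) (hdsin : d = r * Real.sin θ₀)
    (hθ₁ : θ₁ ∈ Set.Ioo 0 (π / 4)) (hsin1 : r / d * Real.sin θ₁ = 1 / 2) :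
    ∀ β : ℝ, θ₀ + β / d ∈ Set.Icc θ₁ (3 * π / 4) →
      (1 / 2 ≤ r / d * Real.sin (θ₀ + β / d)) ∧
      (r / d * Real.sin (θ₀ + β / d) ≤ 1 + |m - r * Real.cos (θ₀ + β / d)|) ∧
      (|β| / 2 ≤ |m - r * Real.cos (θ₀ + β / d)|) :=
  phase_function_properties_general m r θ₀ θ₁ d hmr hr hθ₀ hcos hdsin hθ₁ hsin1
end

section
/- Let r ≥ m+1, r > 1 and r/2 < m < 2r, set d = √(r²−m²) and θ₀ with r cos θ₀ = m, θ₀ ∈ (0,π/2]. For θ ∈ [θ₀, π/2], the function F(θ) = 1 + m − r cos θ − (r/d) sin θ satisfies F(θ) ≥ 0; equivalently (r/d) sin θ ≤ 1 + m − r cos θ on [θ₀, π/2]. -/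
open Real

/-!
Write `r cos θ₀ = m`, `r sin θ₀ = d`. The claim says that the point `(r cos θ, r sin θ)`
lies below the line of slope `-d` through `(m, d)`. The circle lies below its tangent at
`(m, d)`, of slope `-m / d`, which is flatter since `d² = r² - m² ≥ 2m + 1 > m`; to the left
of `m` (that is, for `θ ≥ θ₀`) the steeper line is the higher one.
-/

lemma mul_sin_eq_sqrt_sq_sub_sq_mul_cos {r θ : ℝ} (hr : 0 ≤ r) (hθ : 0 ≤ sin θ) :
    r * sin θ = √(r ^ 2 - (r * cos θ) ^ 2) := by
  rw [show r ^ 2 - (r * cos θ) ^ 2 = (r * sin θ) ^ 2 by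
    linear_combination -r ^ 2 * sin_sq_add_cos_sq θ]
  exact (sqrt_sq (mul_nonneg hr hθ)).symm

lemma mul_cos_mul_add_mul_sin_mul_le (r θ₀ θ : ℝ) :
    r * cos θ₀ * (r * cos θ) + r * sin θ₀ * (r * sin θ) ≤
      (r * cos θ₀) ^ 2 + (r * sin θ₀) ^ 2 :=
  calc r * cos θ₀ * (r * cos θ) + r * sin θ₀ * (r * sin θ) = r ^ 2 * cos (θ - θ₀) := by
        rw [cos_sub]; ring
    _ ≤ r ^ 2 * 1 := mul_le_mul_of_nonneg_left (cos_le_one _) (sq_nonneg r)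
    _ = (r * cos θ₀) ^ 2 + (r * sin θ₀) ^ 2 := by
        linear_combination r ^ 2 * (sin_sq_add_cos_sq θ₀).symm

lemma le_mul_one_add_sub_of_mul_add_mul_le {m d x y : ℝ} (hd : 0 < d) (hmd : m ≤ d ^ 2)
    (hx : x ≤ m) (h : m * x + d * y ≤ m ^ 2 + d ^ 2) : y ≤ d * (1 + m - x) := by
  have hsteep : d * (y - d) ≤ d * (d * (m - x)) := by
    nlinarith [mul_le_mul_of_nonneg_right hmd (sub_nonneg.2 hx)]
  linarith [le_of_mul_le_mul_left hsteep hd]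

theorem phase_F_nonneg_general
    (m r θ₀ d : ℝ)
    (hmr : m + 1 ≤ r) (hr : 1 < r)
    (hd : d = Real.sqrt (r ^ 2 - m ^ 2))
    (hθ₀ : θ₀ ∈ Set.Ioc 0 (π / 2)) (hcos : r * Real.cos θ₀ = m) :
    ∀ θ ∈ Set.Icc θ₀ (π / 2),
      r / d * Real.sin θ ≤ 1 + m - r * Real.cos θ := by
  rintro θ ⟨hθ₀θ, hθπ⟩
  obtain ⟨hθ₀0, hθ₀π⟩ := hθ₀
  have hr0 : 0 ≤ r := by linarith
  have hπ := pi_pos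
  have hsin : r * sin θ₀ = d := by
    rw [hd, ← hcos]
    exact mul_sin_eq_sqrt_sq_sub_sq_mul_cos hr0
      (sin_nonneg_of_nonneg_of_le_pi hθ₀0.le (by linarith))
  have hm0 : 0 ≤ m := hcos ▸ mul_nonneg hr0 (cos_nonneg_of_mem_Icc ⟨by linarith, hθ₀π⟩)
  have hdm : m < d ^ 2 := by
    rw [hd, sq_sqrt (by nlinarith)]
    nlinarith
  have hd0 : 0 < d := by
    have : 0 ≤ d := hd ▸ sqrt_nonneg _
    nlinarith
  have hx : r * cos θ ≤ m :=
    hcos ▸ mul_le_mul_of_nonneg_left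
      (cos_le_cos_of_nonneg_of_le_pi hθ₀0.le (by linarith) hθ₀θ) hr0
  have htangent := mul_cos_mul_add_mul_sin_mul_le r θ₀ θ
  rw [hcos, hsin] at htangent
  rw [div_mul_eq_mul_div, div_le_iff₀ hd0]
  linarith [le_mul_one_add_sub_of_mul_add_mul_le hd0 hdm.le hx htangent]

/-- Sub-claim of the phase lemma: with `r ≥ m+1`, `r > 1`, `r/2 < m < 2r`,
`d = √(r²−m²)`, `θ₀ ∈ (0, π/2]`, `r cos θ₀ = m`, the function
`F(θ) = 1 + m − r cos θ − (r/d) sin θ` is nonnegative on `[θ₀, π/2]`;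
equivalently `(r/d) sin θ ≤ 1 + m − r cos θ` there. -/
theorem phase_F_nonneg
    (m r θ₀ d : ℝ)
    (hmr : m + 1 ≤ r) (hr : 1 < r) (hm1 : r / 2 < m) (hm2 : m < 2 * r)
    (hd : d = Real.sqrt (r ^ 2 - m ^ 2))
    (hθ₀ : θ₀ ∈ Set.Ioc 0 (π / 2)) (hcos : r * Real.cos θ₀ = m) :
    ∀ θ ∈ Set.Icc θ₀ (π / 2),
      r / d * Real.sin θ ≤ 1 + m - r * Real.cos θ :=
  phase_F_nonneg_general m r θ₀ d hmr hr hd hθ₀ hcos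
end

section
/- Let α ∈ 𝒮(ℝ), N ∈ ℕ, and suppose r ≥ 1 and m ∈ ℝ with r < m + 1 and r/2 < m < 2r. Then |∫₀^{3π/4} e^{−ikθ} α̂(m − r cos θ) dθ| ≤ C_N r^{−1/2} ⟨r − m⟩^{−N} for a constant C_N independent of k ∈ ℤ, m and r. -/
open Real SchwartzMap FourierTransform Complex

/-!
On `[0, 3π/4]` the phase `x = m - r cos θ` satisfies `1 + (r - m)² ≤ 2 (1 + x²)`, because
`x ≥ m - r > -1`, and `1 + r θ² / π² ≤ 2 (1 + x²)`, because `cos θ ≤ 1 - 2 θ² / π²`. Splitting the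
decay `(1 + x²)^(-(N + 2)/2)` of the Schwartz function `α̂` accordingly, the first factor gives
`⟨r - m⟩^(-N)` and the second is bounded by `2 (1 + (√r θ / π)²)⁻¹`, whose integral over `θ ≥ 0` is
`π² / (2 √r)` by the arctangent.
-/

theorem SchwartzMap.exists_norm_le_mul_rpow_neg_one_add_norm_sq {E F : Type*}
    [NormedAddCommGroup E] [NormedSpace ℝ E] [NormedAddCommGroup F] [NormedSpace ℝ F]
    (f : 𝓢(E, F)) (k : ℕ) :
    ∃ C, 0 < C ∧ ∀ x, ‖f x‖ ≤ C * (1 + ‖x‖ ^ 2) ^ (-(k : ℝ) / 2) := by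
  set S := (Finset.Iic (k, 0)).sup (fun m => SchwartzMap.seminorm ℝ m.1 m.2) f
  refine ⟨2 ^ k * S + 1, by positivity, fun x => ?_⟩
  have hdecay : (1 + ‖x‖) ^ k * ‖f x‖ ≤ 2 ^ k * S := by
    simpa using one_add_le_sup_seminorm_apply (m := (k, 0)) le_rfl le_rfl f x
  have hweight : (1 + ‖x‖) ^ (-(k : ℝ)) ≤ (1 + ‖x‖ ^ 2) ^ (-(k : ℝ) / 2) := by
    rw [rpow_div_two_eq_sqrt _ (by positivity)]
    exact rpow_le_rpow_of_nonpos (by positivity) (sqrt_one_add_norm_sq_le x) (by simp)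
  calc ‖f x‖ = (1 + ‖x‖) ^ (-(k : ℝ)) * ((1 + ‖x‖) ^ k * ‖f x‖) := by
        rw [rpow_neg (by positivity), rpow_natCast, inv_mul_cancel_left₀ (by positivity)]
    _ ≤ (1 + ‖x‖ ^ 2) ^ (-(k : ℝ) / 2) * (2 ^ k * S + 1) := by gcongr; linarith
    _ = _ := mul_comm _ _

theorem rpow_neg_le_two_rpow_mul_rpow_neg {a b s : ℝ} (ha : 0 < a) (hab : a ≤ 2 * b)
    (hs : 0 ≤ s) : b ^ (-s) ≤ 2 ^ s * a ^ (-s) :=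
  calc b ^ (-s) ≤ (a / 2) ^ (-s) :=
        rpow_le_rpow_of_nonpos (by positivity) (by linarith) (by linarith)
    _ = 2 ^ s * a ^ (-s) := by
        rw [div_rpow ha.le zero_le_two, rpow_neg zero_le_two, div_inv_eq_mul, mul_comm]

theorem one_add_sub_sq_le_two_mul_one_add_sq {m r : ℝ} (θ : ℝ) (hr : 0 ≤ r)
    (hrm : r < m + 1) : 1 + (r - m) ^ 2 ≤ 2 * (1 + (m - r * Real.cos θ) ^ 2) := by
  have hphase : m - r ≤ m - r * Real.cos θ := by nlinarith [Real.cos_le_one θ]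
  rcases le_total r m with h | h <;> nlinarith

theorem one_add_sqrt_mul_sq_le_two_mul_one_add_sq {m r θ : ℝ} (hr : 0 ≤ r)
    (hrm : r < m + 1) (hθ : |θ| ≤ π) :
    1 + (√r / π * θ) ^ 2 ≤ 2 * (1 + (m - r * Real.cos θ) ^ 2) := by
  set t := r * θ ^ 2 / π ^ 2
  have ht : (√r / π * θ) ^ 2 = t := by rw [mul_pow, div_pow, sq_sqrt hr]; ring
  have hcos : r * Real.cos θ ≤ r * (1 - 2 / π ^ 2 * θ ^ 2) :=
    mul_le_mul_of_nonneg_left (cos_le_one_sub_mul_cos_sq hθ) hr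
  have hphase : 2 * t - 1 ≤ m - r * Real.cos θ := by
    have : r * (1 - 2 / π ^ 2 * θ ^ 2) = r - 2 * t := by ring
    linarith
  rw [ht]
  nlinarith [sq_nonneg (m - r * Real.cos θ - 1 / 4)]

theorem integral_inv_one_add_mul_sq_le {c T : ℝ} (hc : 0 < c) :
    ∫ θ in (0 : ℝ)..T, (1 + (c * θ) ^ 2)⁻¹ ≤ π / 2 / c := by
  rw [intervalIntegral.integral_comp_mul_left (fun x => (1 + x ^ 2)⁻¹) hc.ne',
    integral_inv_one_add_sq, mul_zero, arctan_zero, sub_zero, smul_eq_mul, inv_mul_eq_div]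
  gcongr
  exact (arctan_lt_pi_div_two _).le

theorem norm_integral_le_of_norm_le_mul_inv_one_add_mul_sq {E : Type*}
    [NormedAddCommGroup E] [NormedSpace ℝ E] {f : ℝ → E} {K c T : ℝ} (hK : 0 ≤ K) (hc : 0 < c)
    (hT : 0 ≤ T) (hf : ∀ θ ∈ Set.Ioc 0 T, ‖f θ‖ ≤ K * (1 + (c * θ) ^ 2)⁻¹) :
    ‖∫ θ in (0 : ℝ)..T, f θ‖ ≤ K * (π / 2 / c) := by
  have hint : IntervalIntegrable (fun θ : ℝ => K * (1 + (c * θ) ^ 2)⁻¹) MeasureTheory.volume 0 T :=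
    (continuous_const.mul ((by fun_prop : Continuous fun θ : ℝ => 1 + (c * θ) ^ 2).inv₀
      fun θ => by positivity)).intervalIntegrable _ _
  calc _ ≤ ∫ θ in (0 : ℝ)..T, K * (1 + (c * θ) ^ 2)⁻¹ :=
        intervalIntegral.norm_integral_le_of_norm_le hT (Filter.Eventually.of_forall hf) hint
    _ = K * ∫ θ in (0 : ℝ)..T, (1 + (c * θ) ^ 2)⁻¹ := intervalIntegral.integral_const_mul _ _
    _ ≤ K * (π / 2 / c) := by gcongr; exact integral_inv_one_add_mul_sq_le hc

theorem norm_comp_sub_mul_cos_le {E : Type*} [NormedAddCommGroup E] {g : ℝ → E} {D : ℝ}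
    {N : ℕ} (hD : 0 ≤ D) (hg : ∀ x, ‖g x‖ ≤ D * (1 + x ^ 2) ^ (-((N : ℝ) + 2) / 2))
    {m r θ : ℝ} (hr : 0 ≤ r) (hrm : r < m + 1) (hθ : |θ| ≤ π) :
    ‖g (m - r * Real.cos θ)‖ ≤
      2 * 2 ^ ((N : ℝ) / 2) * D * (1 + (r - m) ^ 2) ^ (-(N : ℝ) / 2) *
        (1 + (√r / π * θ) ^ 2)⁻¹ := by
  set A := 1 + (m - r * Real.cos θ) ^ 2
  have hA : 0 < A := by positivity
  have hsplit : A ^ (-((N : ℝ) + 2) / 2) = A ^ (-((N : ℝ) / 2)) * A⁻¹ := by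
    rw [← rpow_neg_one, ← rpow_add hA]; ring_nf
  have hfar : A ^ (-((N : ℝ) / 2)) ≤ 2 ^ ((N : ℝ) / 2) * (1 + (r - m) ^ 2) ^ (-((N : ℝ) / 2)) :=
    rpow_neg_le_two_rpow_mul_rpow_neg (by positivity)
      (one_add_sub_sq_le_two_mul_one_add_sq θ hr hrm) (by positivity)
  have hnear : A⁻¹ ≤ 2 * (1 + (√r / π * θ) ^ 2)⁻¹ := by
    rw [← div_eq_mul_inv, inv_le_comm₀ hA (by positivity), inv_div]
    rw [div_le_iff₀ two_pos]
    linarith [one_add_sqrt_mul_sq_le_two_mul_one_add_sq hr hrm hθ]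
  calc ‖g (m - r * Real.cos θ)‖ ≤ D * (A ^ (-((N : ℝ) / 2)) * A⁻¹) := hsplit ▸ hg _
    _ ≤ D * ((2 ^ ((N : ℝ) / 2) * (1 + (r - m) ^ 2) ^ (-((N : ℝ) / 2))) *
          (2 * (1 + (√r / π * θ) ^ 2)⁻¹)) := by gcongr
    _ = _ := by rw [neg_div]; ring

/-- Lemma `mainest2`, first case: for a Schwartz function `α` and `N ∈ ℕ` there is `C_N`,
independent of `k ∈ ℤ`, `m` and `r`, such that whenever `r ≥ 1`, `r < m+1` and `r/2 < m < 2r`,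
`|∫₀^{3π/4} e^{−ikθ} α̂(m − r cos θ) dθ| ≤ C_N r^{−1/2} ⟨r − m⟩^{−N}`. -/
theorem oscillatory_bessel_easy_case (α : SchwartzMap ℝ ℂ) (N : ℕ) :
    ∃ C : ℝ, 0 < C ∧ ∀ (k : ℤ) (m r : ℝ), 1 ≤ r → r < m + 1 → r / 2 < m → m < 2 * r →
      ‖∫ θ in (0:ℝ)..(3 * π / 4),
          Complex.exp (-Complex.I * (k : ℂ) * (θ : ℂ)) * 𝓕 (⇑α) (m - r * Real.cos θ)‖
        ≤ C * r ^ (-(1/2) : ℝ) * (1 + (r - m) ^ 2) ^ (-(N : ℝ) / 2) := by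
  obtain ⟨D, hD, hdecay⟩ := (𝓕 α).exists_norm_le_mul_rpow_neg_one_add_norm_sq (N + 2)
  refine ⟨π ^ 2 * 2 ^ ((N : ℝ) / 2) * D, by positivity, fun k m r hr hrm _ _ => ?_⟩
  set c := √r / π
  have hc : 0 < c := by positivity
  set K := 2 * 2 ^ ((N : ℝ) / 2) * D * (1 + (r - m) ^ 2) ^ (-(N : ℝ) / 2)
  have hpoint : ∀ θ ∈ Set.Ioc 0 (3 * π / 4),
      ‖Complex.exp (-Complex.I * (k : ℂ) * (θ : ℂ)) * 𝓕 (⇑α) (m - r * Real.cos θ)‖ ≤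
        K * (1 + (c * θ) ^ 2)⁻¹ := by
    rintro θ ⟨hθ₀, hθ₁⟩
    have hunit : ‖Complex.exp (-Complex.I * (k : ℂ) * (θ : ℂ))‖ = 1 := by
      rw [Complex.norm_exp]; simp
    rw [norm_mul, hunit, one_mul, ← fourier_coe]
    refine norm_comp_sub_mul_cos_le (g := ⇑(𝓕 α : 𝓢(ℝ, ℂ))) (N := N) (θ := θ) hD.le
      (fun x => ?_) (by positivity) hrm (abs_le.2 ⟨by linarith [pi_pos], by linarith [pi_pos]⟩)
    simpa [Nat.cast_add] using hdecay x
  calc _ ≤ K * (π / 2 / c) :=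
        norm_integral_le_of_norm_le_mul_inv_one_add_mul_sq (by positivity) hc (by positivity) hpoint
    _ = _ := by
        rw [rpow_neg (by positivity), ← sqrt_eq_rpow]
        simp only [K, c]
        field_simp
end
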